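/- arXiv:2409.00573 — 2 statements merged into one kernel-verified Lean document; each statement's English description precedes it below -/
import Mathlib

section
/- Weak inf-compactness sufficient condition: let X be a normed space, U ⊆ X, and suppose every f_t (t ∈ T) is weakly sequentially lower semicontinuous on U, i.e., f_t(x) ≤ liminf_k f_t(x_k) whenever x_k ∈ U converge weakly to x ∈ U. If there exist t₀ ∈ T and a finite S₀ ⊆ T such that the set {x ∈ U : f_{t₀}(x) ≤ c} is weakly sequentially compact for every c ∈ ℝ, and Λ_U({f_t}_{t∈S∖{t₀}}) > −∞ for every finite S ⊆ T with S₀ ∪ {t₀} ⊆ S, then limsup_{S↑T} ( inf_U Σ_{t∈S} f_t − Λ_U({f_t}_{t∈S}) ) ≤ 0. -/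
open scoped BigOperators
open Filter

noncomputable section

/-- Upper limit of a net indexed by the finite subsets of `T` directed by inclusion:
`limsup_{S↑T} α_S := inf over S₀ of sup over finite S ⊇ S₀ of α_S`. -/
def limsupF {T : Type*} (α : Finset T → EReal) : EReal :=
  ⨅ S₀ : Finset T, ⨆ (S : Finset T) (_ : S₀ ⊆ S), α S

/-- Lower limit of a net indexed by the finite subsets of `T` directed by inclusion. -/
def liminfF {T : Type*} (α : Finset T → EReal) : EReal :=
  ⨆ S₀ : Finset T, ⨅ (S : Finset T) (_ : S₀ ⊆ S), α S

/-- The upper sum `(Σ̄_{t∈T} f_t)(x) := limsup_{S↑T} Σ_{t∈S} f_t(x)`. -/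
def upperSum {T X : Type*} (f : T → X → EReal) (x : X) : EReal :=
  limsupF (fun S => ∑ t ∈ S, f t x)

/-- `Λ_U({f_t}_{t∈S})` for a finite `S`: the supremum over `δ > 0` of the infimum of
`Σ_{t∈S} f_t(x_t)` over all choices `x_t ∈ U` with `diam{x_t}_{t∈S} < δ`. -/
def LambdaFin {T X : Type*} [MetricSpace X] (U : Set X) (f : T → X → EReal)
    (S : Finset T) : EReal :=
  ⨆ (δ : ℝ) (_ : 0 < δ),
    ⨅ (x : T → X) (_ : ∀ t ∈ S, x t ∈ U)
      (_ : ∀ t ∈ S, ∀ t' ∈ S, dist (x t) (x t') < δ),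
      ∑ t ∈ S, f t (x t)

/-- The uniform infimum `Λ_U({f_t}_{t∈T}) := liminf_{S↑T} Λ_U({f_t}_{t∈S})`. -/
def Lambda {T X : Type*} [MetricSpace X] (U : Set X) (f : T → X → EReal) : EReal :=
  liminfF (fun S => LambdaFin U f S)

/-- The Θ-quantity for a finite `S`, with points `x_t ∈ dom f_t ∩ V` and the inner
infimum over `x ∈ U`. -/
def ThetaFin2 {T X : Type*} [MetricSpace X] (V U : Set X) (f : T → X → EReal)
    (S : Finset T) : EReal :=
  ⨅ (δ : ℝ) (_ : 0 < δ),
    ⨆ (x : T → X) (_ : ∀ t ∈ S, x t ∈ V ∧ f t (x t) ≠ ⊤)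
      (_ : ∀ t ∈ S, ∀ t' ∈ S, dist (x t) (x t') < δ),
      ⨅ (y : X) (_ : y ∈ U),
        max (⨆ t ∈ S, (dist y (x t) : EReal))
          (upperSum f y - ∑ t ∈ S, f t (x t))

/-- `Θ_U({f_t}_{t∈T})`. -/
def Theta {T X : Type*} [MetricSpace X] (U : Set X) (f : T → X → EReal) : EReal :=
  limsupF (fun S => ThetaFin2 U U f S)

/-- The family of essentially interior subsets of `U`. -/
def EI {X : Type*} [MetricSpace X] (U : Set X) : Set (Set X) :=
  {V | V ⊆ U ∧ ∃ ρ > 0, (⋃ x ∈ V, Metric.ball x ρ) ⊆ U}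

/-- The quasiuniform infimum `Λ†_U({f_t}_{t∈T}) := inf over V ∈ EI(U) of Λ_V({f_t}_{t∈T})`. -/
def LambdaDag {T X : Type*} [MetricSpace X] (U : Set X) (f : T → X → EReal) : EReal :=
  ⨅ V ∈ EI U, Lambda V f

/-- `Θ†_U({f_t}_{t∈T})`. -/
def ThetaDag {T X : Type*} [MetricSpace X] (U : Set X) (f : T → X → EReal) : EReal :=
  ⨆ V ∈ EI U, limsupF (fun S => ThetaFin2 V U f S)

/-- Weak sequential convergence in a normed space. -/
def WeakSeqTendsto {X : Type*} [NormedAddCommGroup X] [NormedSpace ℝ X]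
    (x : ℕ → X) (y : X) : Prop :=
  ∀ p : X →L[ℝ] ℝ, Tendsto (fun n => p (x n)) atTop (nhds (p y))

/- ### Auxiliary lemmas -/

private lemma ereal_coe_sum {T : Type*} (S : Finset T) (r : T → ℝ) :
    ((∑ t ∈ S, r t : ℝ) : EReal) = ∑ t ∈ S, (r t : EReal) := by
  induction S using Finset.cons_induction with
  | empty => simp
  | cons a s ha ih => simp [Finset.sum_cons, EReal.coe_add, ih]

private lemma ereal_sum_ne_bot {T : Type*} (S : Finset T) (v : T → EReal)
    (hv : ∀ t ∈ S, v t ≠ ⊥) : (∑ t ∈ S, v t) ≠ ⊥ := by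
  induction S using Finset.cons_induction with
  | empty => simp
  | cons a s ha ih =>
    rw [Finset.sum_cons, Ne, EReal.add_eq_bot_iff]
    push_neg
    exact ⟨hv a (Finset.mem_cons_self a s),
      ih fun t ht => hv t (Finset.mem_cons_of_mem ht)⟩

private lemma ereal_exists_coe_le {a : EReal} (h : a ≠ ⊥) : ∃ m : ℝ, (m : EReal) ≤ a := by
  induction a with
  | bot => exact absurd rfl h
  | coe x => exact ⟨x, le_rfl⟩
  | top => exact ⟨0, le_top⟩

private lemma ereal_split_lt_add {a b : EReal} {c : ℝ} (ha : a ≠ ⊥) (hb : b ≠ ⊥)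
    (h : (c : EReal) < a + b) :
    ∃ c₁ c₂ : ℝ, c = c₁ + c₂ ∧ (c₁ : EReal) < a ∧ (c₂ : EReal) < b := by
  induction a with
  | bot => exact absurd rfl ha
  | coe a =>
    have hb' : ((c - a : ℝ) : EReal) < b := by
      rw [EReal.coe_sub]
      exact EReal.sub_lt_of_lt_add (by rwa [add_comm] at h)
    obtain ⟨c₂, h1, h2⟩ := EReal.exists_between_coe_real hb'
    refine ⟨c - c₂, c₂, by ring, ?_, h2⟩
    rw [EReal.coe_lt_coe_iff] at h1 ⊢
    linarith
  | top =>
    obtain ⟨c₂, _, h2⟩ := EReal.exists_between_coe_real (Ne.bot_lt hb)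
    exact ⟨c - c₂, c₂, by ring, EReal.coe_lt_top _, h2⟩

private lemma ereal_exists_real_lt_sum {T : Type*} (S : Finset T) (v : T → EReal)
    (hv : ∀ t ∈ S, v t ≠ ⊥) {c : ℝ} (h : (c : EReal) < ∑ t ∈ S, v t) :
    ∃ r : T → ℝ, (∀ t ∈ S, (r t : EReal) < v t) ∧ c < ∑ t ∈ S, r t := by
  classical
  induction S using Finset.cons_induction generalizing c with
  | empty => exact ⟨fun _ => 0, by simp, by simpa using EReal.coe_lt_coe_iff.mp (by simpa using h)⟩
  | cons a s ha ih =>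
    rw [Finset.sum_cons] at h
    obtain ⟨c₁, c₂, hc, h1, h2⟩ := ereal_split_lt_add (hv a (Finset.mem_cons_self a s))
      (ereal_sum_ne_bot s v fun t ht => hv t (Finset.mem_cons_of_mem ht)) h
    obtain ⟨r, hr1, hr2⟩ := ih (fun t ht => hv t (Finset.mem_cons_of_mem ht)) h2
    refine ⟨Function.update r a c₁, ?_, ?_⟩
    · intro t ht
      rcases Finset.mem_cons.mp ht with rfl | ht'
      · simpa using h1
      · have hta : t ≠ a := fun hh => ha (by rw [← hh]; exact ht')
        rw [Function.update_of_ne hta]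
        exact hr1 t ht'
    · rw [Finset.sum_cons, Function.update_self]
      have : ∑ t ∈ s, Function.update r a c₁ t = ∑ t ∈ s, r t :=
        Finset.sum_congr rfl fun t ht => Function.update_of_ne (fun hh => ha (by rw [← hh]; exact ht)) _ _
      rw [this, hc]
      linarith

/-- Weak inf-compactness sufficient condition for
`limsup_{S↑T} ( inf_U Σ_{t∈S} f_t − Λ_U({f_t}_{t∈S}) ) ≤ 0`. -/
theorem weak_inf_compactness_sufficient_condition
    {X : Type*} [NormedAddCommGroup X] [NormedSpace ℝ X]
    {T : Type*} [Nonempty T] [DecidableEq T]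
    (f : T → X → EReal) (U : Set X)
    (hbot : ∀ t x, f t x ≠ ⊥)
    (hdom : ∃ x : X, ∀ t, f t x ≠ ⊤)
    (hbdd : ∀ S : Finset T, (⨅ x : X, ∑ t ∈ S, f t x) ≠ ⊥)
    (hwlsc : ∀ t, ∀ (x : ℕ → X) (y : X), (∀ n, x n ∈ U) → y ∈ U →
      WeakSeqTendsto x y → f t y ≤ liminf (fun n => f t (x n)) atTop)
    (t₀ : T) (S₀ : Finset T)
    (hcompact : ∀ c : ℝ, ∀ x : ℕ → X,
      (∀ n, x n ∈ U ∧ f t₀ (x n) ≤ (c : EReal)) →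
      ∃ y : X, (y ∈ U ∧ f t₀ y ≤ (c : EReal)) ∧
        ∃ φ : ℕ → ℕ, StrictMono φ ∧ WeakSeqTendsto (x ∘ φ) y)
    (hLam : ∀ S : Finset T, insert t₀ S₀ ⊆ S → LambdaFin U f (S.erase t₀) ≠ ⊥) :
    limsupF (fun S => (⨅ x ∈ U, ∑ t ∈ S, f t x) - LambdaFin U f S) ≤ 0 := by
  have main : ∀ S : Finset T, insert t₀ S₀ ⊆ S →
      (⨅ x ∈ U, ∑ t ∈ S, f t x) ≤ LambdaFin U f S := by
    intro S hS
    by_contra hcon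
    push_neg at hcon
    obtain ⟨c, hc1, hc2⟩ := EReal.exists_between_coe_real hcon
    have ht₀S : t₀ ∈ S := hS (Finset.mem_insert_self _ _)
    -- extract a real lower bound for the erased sums at some scale δ₁
    have hLbot : (⊥ : EReal) < LambdaFin U f (S.erase t₀) :=
      Ne.bot_lt' (Ne.symm (hLam S hS))
    rw [LambdaFin, lt_iSup_iff] at hLbot
    obtain ⟨δ₁, hδ₁⟩ := hLbot
    rw [lt_iSup_iff] at hδ₁
    obtain ⟨hδ₁pos, hinner⟩ := hδ₁
    obtain ⟨m, hm⟩ := ereal_exists_coe_le (Ne.symm hinner.ne)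
    -- for each k, a configuration with diameter < min δ₁ (1/(k+1)) and small sum
    set δ : ℕ → ℝ := fun k => min δ₁ (1 / (k + 1)) with hδdef
    have hδpos : ∀ k : ℕ, 0 < δ k := fun k =>
      lt_min hδ₁pos (by positivity)
    have hconfig : ∀ k : ℕ, ∃ x : T → X, (∀ t ∈ S, x t ∈ U) ∧
        (∀ t ∈ S, ∀ t' ∈ S, dist (x t) (x t') < δ k) ∧
        (∑ t ∈ S, f t (x t)) < (c : EReal) := by
      intro k
      have h1 : (⨅ (x : T → X) (_ : ∀ t ∈ S, x t ∈ U)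
          (_ : ∀ t ∈ S, ∀ t' ∈ S, dist (x t) (x t') < δ k),
          ∑ t ∈ S, f t (x t)) ≤ LambdaFin U f S := by
        rw [LambdaFin]
        exact le_iSup₂_of_le (δ k) (hδpos k) le_rfl
      have h2 := h1.trans_lt hc1
      simp only [iInf_lt_iff] at h2
      obtain ⟨x, hx1, hx2, hx3⟩ := h2
      exact ⟨x, hx1, hx2, hx3⟩
    choose xk hxU hxd hxsum using hconfig
    -- lower bound for the sum over S.erase t₀
    have herase : ∀ k : ℕ, (m : EReal) ≤ ∑ t ∈ S.erase t₀, f t (xk k t) := by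
      intro k
      refine hm.trans (iInf_le_of_le (xk k) (iInf_le_of_le
        (fun t ht => hxU k t (Finset.mem_of_mem_erase ht)) (iInf_le _
        (fun t ht t' ht' =>
          lt_of_lt_of_le (hxd k t (Finset.mem_of_mem_erase ht) t' (Finset.mem_of_mem_erase ht'))
            (min_le_left _ _)))))
    -- upper bound for f t₀ at the configurations
    have ht0bd : ∀ k : ℕ, f t₀ (xk k t₀) ≤ ((c - m : ℝ) : EReal) := by
      intro k
      have hsum : f t₀ (xk k t₀) + ∑ t ∈ S.erase t₀, f t (xk k t) < (c : EReal) := by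
        rw [show f t₀ (xk k t₀) + ∑ t ∈ S.erase t₀, f t (xk k t)
            = ∑ t ∈ S, f t (xk k t) from Finset.add_sum_erase S (fun t => f t (xk k t)) ht₀S]
        exact hxsum k
      have h2 : f t₀ (xk k t₀) + (m : EReal) < (c : EReal) :=
        lt_of_le_of_lt (add_le_add_right (herase k) _) hsum
      have h3 : f t₀ (xk k t₀) < (c : EReal) - (m : EReal) :=
        (EReal.lt_sub_iff_add_lt (Or.inl (EReal.coe_ne_bot m))
          (Or.inl (EReal.coe_ne_top m))).mpr h2
      rw [EReal.coe_sub]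
      exact h3.le
    -- weak compactness gives a weak limit point
    obtain ⟨y, ⟨hyU, _⟩, φ, hφ, hweak⟩ :=
      hcompact (c - m) (fun k => xk k t₀) (fun k => ⟨hxU k t₀ ht₀S, ht0bd k⟩)
    -- every coordinate converges weakly to y
    have hwt : ∀ t ∈ S, WeakSeqTendsto (fun n => xk (φ n) t) y := by
      intro t ht p
      have hb : ∀ k : ℕ, ‖p (xk k t) - p (xk k t₀)‖ ≤ ‖p‖ * (1 / (k + 1)) := by
        intro k
        have hd : dist (xk k t) (xk k t₀) ≤ 1 / (k + 1) :=
          le_of_lt (lt_of_lt_of_le (hxd k t ht t₀ ht₀S) (min_le_right _ _))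
        calc ‖p (xk k t) - p (xk k t₀)‖ = ‖p (xk k t - xk k t₀)‖ := by rw [map_sub]
          _ ≤ ‖p‖ * ‖xk k t - xk k t₀‖ := p.le_opNorm _
          _ ≤ ‖p‖ * (1 / (k + 1)) := by
              refine mul_le_mul_of_nonneg_left ?_ (norm_nonneg _)
              rw [← dist_eq_norm]
              exact hd
      have hg : Tendsto (fun k : ℕ => ‖p‖ * (1 / (k + 1 : ℝ))) atTop (nhds 0) := by
        have := tendsto_one_div_add_atTop_nhds_zero_nat.const_mul ‖p‖
        simpa using this
      have h0 : Tendsto (fun n => p (xk (φ n) t) - p (xk (φ n) t₀)) atTop (nhds 0) := by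
        refine squeeze_zero_norm (fun n => hb (φ n)) ?_
        exact hg.comp hφ.tendsto_atTop
      have h1 : Tendsto (fun n => p (xk (φ n) t₀)) atTop (nhds (p y)) := by
        have := hweak p
        simpa [Function.comp] using this
      have := h0.add h1
      simpa using this
    -- weak lower semicontinuity
    have hliminf : ∀ t ∈ S, f t y ≤ liminf (fun n => f t (xk (φ n) t)) atTop :=
      fun t ht => hwlsc t (fun n => xk (φ n) t) y (fun n => hxU (φ n) t ht) hyU (hwt t ht)
    have hIy : (c : EReal) < ∑ t ∈ S, f t y :=
      lt_of_lt_of_le hc2 (iInf₂_le y hyU)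
    obtain ⟨r, hr1, hr2⟩ := ereal_exists_real_lt_sum S (fun t => f t y)
      (fun t _ => hbot t y) hIy
    have hev : ∀ᶠ n in (atTop : Filter ℕ), ∀ t ∈ S, (r t : EReal) < f t (xk (φ n) t) := by
      rw [eventually_all_finset]
      intro t ht
      exact eventually_lt_of_lt_liminf (lt_of_lt_of_le (hr1 t ht) (hliminf t ht))
    obtain ⟨n, hn⟩ := hev.exists
    have hle : ((∑ t ∈ S, r t : ℝ) : EReal) ≤ ∑ t ∈ S, f t (xk (φ n) t) := by
      rw [ereal_coe_sum]
      exact Finset.sum_le_sum fun t ht => (hn t ht).le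
    have : (c : EReal) < (c : EReal) :=
      lt_of_lt_of_le (EReal.coe_lt_coe_iff.mpr hr2) (hle.trans (hxsum (φ n)).le)
    exact lt_irrefl _ this
  -- conclude
  refine le_trans (iInf_le _ (insert t₀ S₀)) (iSup₂_le fun S hS => ?_)
  exact EReal.sub_le_of_le_add (by rw [zero_add]; exact main S hS)
end
end

section
/- Stability of firm quasiuniform lower semicontinuity under a uniformly continuous perturbation: let U ⊆ X, suppose {f_t}_{t∈T} is firmly quasiuniformly lower semicontinuous on U, and g : X → ℝ is uniformly continuous на U (i.e., for every ε > 0 there is ρ > 0 such that |g(x') − g(x'')| < ε whenever x', x'' ∈ U and d(x', x'') < ρ). Fix t₀ ∈ T and set f̃_{t₀} := f_{t₀} + g and f̃_t := f_t for all t ∈ T with t ≠ t₀. Then {f̃_t}_{t∈T} is firmly quasiuniformly lower semicontinuous on U. -/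
open scoped BigOperators
open Filter

noncomputable section

section Aux

set_option linter.unusedSectionVars false

variable {T : Type*} [DecidableEq T] {X : Type*} [MetricSpace X]

/-- Adding a real constant is an order isomorphism of `EReal`. -/
def ERealAddIso (c : ℝ) : EReal ≃o EReal where
  toFun a := a + (c : EReal)
  invFun a := a - (c : EReal)
  left_inv _ := EReal.add_sub_cancel_right
  right_inv _ := EReal.sub_add_cancel
  map_rel_iff' := (EReal.addLECancellable_coe c).add_le_add_iff_right

lemma iSup_add_coe {ι : Sort*} (u : ι → EReal) (c : ℝ) :
    (⨆ i, (u i + (c : EReal))) = (⨆ i, u i) + (c : EReal) :=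
  ((ERealAddIso c).map_iSup u).symm

lemma iInf_add_coe {ι : Sort*} (u : ι → EReal) (c : ℝ) :
    (⨅ i, (u i + (c : EReal))) = (⨅ i, u i) + (c : EReal) :=
  ((ERealAddIso c).map_iInf u).symm

lemma limsupF_restrict (α : Finset T → EReal) (S₁ : Finset T) :
    limsupF α = ⨅ S₀ : Finset T, ⨆ (S : Finset T) (_ : S₀ ∪ S₁ ⊆ S), α S := by
  apply le_antisymm
  · exact le_iInf fun S₀ => iInf_le_of_le (S₀ ∪ S₁) le_rfl
  · refine le_iInf fun S₀ => iInf_le_of_le S₀ ?_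
    exact iSup_le fun S => iSup_le fun hS =>
      le_iSup₂ (f := fun (S : Finset T) (_ : S₀ ⊆ S) => α S) S
        (Finset.subset_union_left.trans hS)

lemma limsupF_congr_on (α β : Finset T → EReal) (S₁ : Finset T)
    (h : ∀ S, S₁ ⊆ S → α S = β S) : limsupF α = limsupF β := by
  rw [limsupF_restrict α S₁, limsupF_restrict β S₁]
  exact iInf_congr fun S₀ => iSup_congr fun S => iSup_congr fun hS =>
    h S (Finset.subset_union_right.trans hS)

lemma limsupF_add_coe (α : Finset T → EReal) (c : ℝ) :
    limsupF (fun S => α S + (c : EReal)) = limsupF α + (c : EReal) := by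
  unfold limsupF
  rw [← iInf_add_coe]
  refine iInf_congr fun S₀ => ?_
  rw [← iSup_add_coe]
  exact iSup_congr fun S => iSup_add_coe _ c

lemma sum_if_add (S : Finset T) (t₀ : T) (ht₀ : t₀ ∈ S) (p : T → EReal) (c : T → ℝ) :
    (∑ t ∈ S, (if t = t₀ then p t + ((c t : ℝ) : EReal) else p t))
      = (∑ t ∈ S, p t) + ((c t₀ : ℝ) : EReal) := by
  have h : ∀ t, (if t = t₀ then p t + ((c t : ℝ) : EReal) else p t)
      = p t + (if t = t₀ then ((c t₀ : ℝ) : EReal) else 0) := by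
    intro t
    by_cases ht : t = t₀
    · subst ht; simp
    · simp [ht]
  simp only [h]
  rw [Finset.sum_add_distrib, Finset.sum_ite_eq' S t₀ (fun _ => ((c t₀ : ℝ) : EReal)),
    if_pos ht₀]

lemma sum_ne_top' (S : Finset T) (p : T → EReal) (h : ∀ t ∈ S, p t ≠ ⊤) :
    (∑ t ∈ S, p t) ≠ ⊤ := by
  induction S using Finset.cons_induction with
  | empty => simp
  | cons a s ha ih =>
    rw [Finset.sum_cons]
    exact (EReal.add_lt_top (h a (Finset.mem_cons_self a s))
      (ih fun t ht => h t (Finset.mem_cons_of_mem ht))).ne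

lemma sum_ne_bot' (S : Finset T) (p : T → EReal) (h : ∀ t ∈ S, p t ≠ ⊥) :
    (∑ t ∈ S, p t) ≠ ⊥ := by
  induction S using Finset.cons_induction with
  | empty => simp
  | cons a s ha ih =>
    rw [Finset.sum_cons]
    intro hb
    rcases EReal.add_eq_bot_iff.1 hb with h1 | h2
    · exact h a (Finset.mem_cons_self a s) h1
    · exact ih (fun t ht => h t (Finset.mem_cons_of_mem ht)) h2

lemma upperSum_perturb (f : T → X → EReal) (g : X → ℝ) (t₀ : T) (y : X) :
    upperSum (fun t x => if t = t₀ then f t x + ((g x : ℝ) : EReal) else f t x) y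
      = upperSum f y + ((g y : ℝ) : EReal) := by
  unfold upperSum
  rw [limsupF_congr_on _ (fun S => (∑ t ∈ S, f t y) + ((g y : ℝ) : EReal)) {t₀}
    (fun S hS => sum_if_add S t₀ (Finset.singleton_subset_iff.1 hS) (fun t => f t y)
      (fun _ => g y))]
  exact limsupF_add_coe _ _

lemma perturb_top_iff (f : T → X → EReal) (g : X → ℝ) (t₀ t : T) (x : X) :
    (if t = t₀ then f t x + ((g x : ℝ) : EReal) else f t x) = ⊤ ↔ f t x = ⊤ := by
  by_cases ht : t = t₀
  · rw [if_pos ht]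
    constructor
    · intro h
      by_contra hne
      exact (EReal.add_lt_top hne (EReal.coe_ne_top _)).ne h
    · intro h; rw [h, EReal.top_add_coe]
  · rw [if_neg ht]

lemma thetaFin_nonneg (V U : Set X) (f : T → X → EReal) (S : Finset T) (hS : S.Nonempty)
    (h : ∀ δ : ℝ, 0 < δ → ∃ x : T → X, (∀ t ∈ S, x t ∈ V ∧ f t (x t) ≠ ⊤) ∧
      ∀ t ∈ S, ∀ t' ∈ S, dist (x t) (x t') < δ) :
    (0 : EReal) ≤ ThetaFin2 V U f S := by
  unfold ThetaFin2
  refine le_iInf fun δ => le_iInf fun hδ => ?_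
  obtain ⟨x, h1, h2⟩ := h δ hδ
  refine le_iSup_of_le x (le_iSup_of_le h1 (le_iSup_of_le h2 ?_))
  refine le_iInf fun y => le_iInf fun hy => ?_
  refine le_trans ?_ (le_max_left _ _)
  obtain ⟨t, ht⟩ := hS
  exact le_iSup₂_of_le t ht (EReal.coe_nonneg.2 dist_nonneg)

lemma thetaFin_bot (V U : Set X) (f : T → X → EReal) (S : Finset T)
    (h : ∃ δ : ℝ, 0 < δ ∧ ∀ x : T → X, ¬((∀ t ∈ S, x t ∈ V ∧ f t (x t) ≠ ⊤) ∧
      ∀ t ∈ S, ∀ t' ∈ S, dist (x t) (x t') < δ)) :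
    ThetaFin2 V U f S = ⊥ := by
  obtain ⟨δ, hδ, hx⟩ := h
  refine le_bot_iff.1 ?_
  unfold ThetaFin2
  refine iInf₂_le_of_le δ hδ ?_
  exact iSup_le fun x => iSup_le fun h1 => iSup_le fun h2 => (hx x ⟨h1, h2⟩).elim

lemma limsup_bot_transfer (V U : Set X) (f₁ f₂ : T → X → EReal) (t₁ : T)
    (hval : ∀ t (x : X), f₁ t x = ⊤ → f₂ t x = ⊤)
    (hlt : limsupF (fun S => ThetaFin2 V U f₁ S) < 0) :
    limsupF (fun S => ThetaFin2 V U f₂ S) = ⊥ := by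
  unfold limsupF at hlt ⊢
  obtain ⟨S₀, hS₀⟩ := iInf_lt_iff.1 hlt
  refine le_bot_iff.1 (iInf_le_of_le (insert t₁ S₀) ?_)
  refine iSup_le fun S => iSup_le fun hS => ?_
  have hne : S.Nonempty := ⟨t₁, hS (Finset.mem_insert_self t₁ S₀)⟩
  have h1 : ThetaFin2 V U f₁ S < 0 :=
    lt_of_le_of_lt (le_iSup₂ (f := fun (S : Finset T) (_ : S₀ ⊆ S) => ThetaFin2 V U f₁ S) S
      ((Finset.subset_insert t₁ S₀).trans hS)) hS₀
  have hnv : ∃ δ : ℝ, 0 < δ ∧ ∀ x : T → X, ¬((∀ t ∈ S, x t ∈ V ∧ f₁ t (x t) ≠ ⊤) ∧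
      ∀ t ∈ S, ∀ t' ∈ S, dist (x t) (x t') < δ) := by
    by_contra hcon
    push_neg at hcon
    exact absurd (thetaFin_nonneg V U f₁ S hne hcon) h1.not_ge
  obtain ⟨δ, hδ, hno⟩ := hnv
  refine le_of_eq (thetaFin_bot V U f₂ S ⟨δ, hδ, fun x hx => hno x
    ⟨fun t ht => ⟨(hx.1 t ht).1, fun htop => (hx.1 t ht).2 (hval t (x t) htop)⟩, hx.2⟩⟩)

lemma limsup_perturb_le (V U : Set X) (f : T → X → EReal) (g : X → ℝ) (t₀ : T)
    (hbot : ∀ t x, f t x ≠ ⊥) (hVU : V ⊆ U)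
    (hg : ∀ ε : ℝ, 0 < ε → ∃ ρ : ℝ, 0 < ρ ∧
      ∀ x' ∈ U, ∀ x'' ∈ U, dist x' x'' < ρ → |g x' - g x''| < ε)
    (hf : limsupF (fun S => ThetaFin2 V U f S) ≤ 0) :
    limsupF (fun S => ThetaFin2 V U
      (fun t x => if t = t₀ then f t x + ((g x : ℝ) : EReal) else f t x) S) ≤ 0 := by
  set F : T → X → EReal := fun t x => if t = t₀ then f t x + ((g x : ℝ) : EReal) else f t x
    with hF
  refine EReal.le_of_forall_lt_iff_le.1 fun ε hε0 => ?_
  have hε : (0 : ℝ) < ε := by exact_mod_cast hε0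
  obtain ⟨ρ, hρ, hgρ⟩ := hg (ε / 2) (by linarith)
  set η : ℝ := min ρ (ε / 2) with hηdef
  have hη0 : (0 : ℝ) < η := lt_min hρ (by linarith)
  have hfη : limsupF (fun S => ThetaFin2 V U f S) < ((η : ℝ) : EReal) :=
    lt_of_le_of_lt hf (by exact_mod_cast hη0)
  unfold limsupF at hfη
  obtain ⟨S₀, hS₀⟩ := iInf_lt_iff.1 hfη
  have key : ∀ S : Finset T, insert t₀ S₀ ⊆ S →
      ThetaFin2 V U F S ≤ ((η + ε / 2 : ℝ) : EReal) := by
    intro S hS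
    have ht₀S : t₀ ∈ S := hS (Finset.mem_insert_self _ _)
    have hfS : ThetaFin2 V U f S < ((η : ℝ) : EReal) :=
      lt_of_le_of_lt (le_iSup₂ (f := fun (S : Finset T) (_ : S₀ ⊆ S) => ThetaFin2 V U f S) S
        ((Finset.subset_insert t₀ S₀).trans hS)) hS₀
    unfold ThetaFin2 at hfS
    obtain ⟨δ, hδ1⟩ := iInf_lt_iff.1 hfS
    obtain ⟨hδ0, hΦ⟩ := iInf_lt_iff.1 hδ1
    set δ' : ℝ := min δ ρ with hδ'def
    have hδ'0 : (0 : ℝ) < δ' := lt_min hδ0 hρ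
    unfold ThetaFin2
    refine le_trans (iInf₂_le δ' hδ'0) ?_
    refine iSup_le fun x => iSup_le fun h1 => iSup_le fun h2 => ?_
    have h1f : ∀ t ∈ S, x t ∈ V ∧ f t (x t) ≠ ⊤ := fun t ht =>
      ⟨(h1 t ht).1, fun htop => (h1 t ht).2 ((perturb_top_iff f g t₀ t (x t)).2 htop)⟩
    have h2f : ∀ t ∈ S, ∀ t' ∈ S, dist (x t) (x t') < δ := fun t ht t' ht' =>
      lt_of_lt_of_le (h2 t ht t' ht') (min_le_left _ _)
    have hinner : (⨅ (y : X) (_ : y ∈ U),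
        max (⨆ t ∈ S, (dist y (x t) : EReal))
          (upperSum f y - ∑ t ∈ S, f t (x t))) < ((η : ℝ) : EReal) := by
      refine lt_of_le_of_lt ?_ hΦ
      refine le_iSup_of_le x ?_
      refine le_iSup_of_le h1f ?_
      exact le_iSup_of_le h2f le_rfl
    obtain ⟨y, hy1⟩ := iInf_lt_iff.1 hinner
    obtain ⟨hyU, hymax⟩ := iInf_lt_iff.1 hy1
    have hAy : ((dist y (x t₀) : ℝ) : EReal) < ((η : ℝ) : EReal) :=
      lt_of_le_of_lt (le_trans
        (le_iSup₂ (f := fun t (_ : t ∈ S) => ((dist y (x t) : ℝ) : EReal)) t₀ ht₀S)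
        (le_max_left _ _)) hymax
    have hdyx : dist y (x t₀) < ρ :=
      lt_of_lt_of_le (EReal.coe_lt_coe_iff.1 hAy) (min_le_left _ _)
    have hgy : |g y - g (x t₀)| < ε / 2 := hgρ y hyU (x t₀) (hVU (h1f t₀ ht₀S).1) hdyx
    have hsnetop : (∑ t ∈ S, f t (x t)) ≠ ⊤ := sum_ne_top' S _ (fun t ht => (h1f t ht).2)
    have hsnebot : (∑ t ∈ S, f t (x t)) ≠ ⊥ := sum_ne_bot' S _ (fun t _ => hbot t (x t))
    set r : ℝ := (∑ t ∈ S, f t (x t)).toReal with hrdef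
    have hrs : (∑ t ∈ S, f t (x t)) = ((r : ℝ) : EReal) :=
      (EReal.coe_toReal hsnetop hsnebot).symm
    have hFsum : (∑ t ∈ S, F t (x t)) = ((r + g (x t₀) : ℝ) : EReal) := by
      simp only [hF]
      rw [sum_if_add S t₀ ht₀S (fun t => f t (x t)) (fun t => g (x t)), hrs,
        ← EReal.coe_add]
    have hB : upperSum f y - ((r : ℝ) : EReal) < ((η : ℝ) : EReal) := by
      rw [← hrs]
      exact lt_of_le_of_lt (le_max_right _ _) hymax
    refine le_trans (iInf₂_le y hyU) ?_
    refine max_le ?_ ?_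
    · refine le_trans (le_trans (le_max_left _ _) hymax.le) ?_
      exact EReal.coe_le_coe_iff.2 (by linarith)
    · rw [upperSum_perturb f g t₀ y, hFsum]
      rw [sub_eq_add_neg, add_assoc, ← EReal.coe_neg, ← EReal.coe_add]
      have e1 : (g y + -(r + g (x t₀)) : ℝ) = (g y - g (x t₀)) + -r := by ring
      rw [e1]
      have e2 : upperSum f y + (((g y - g (x t₀)) + -r : ℝ) : EReal)
          ≤ upperSum f y + ((ε / 2 + -r : ℝ) : EReal) := by
        refine add_le_add_right (EReal.coe_le_coe_iff.2 ?_) _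
        have := abs_lt.1 hgy
        linarith [this.2]
      refine le_trans e2 ?_
      have e3 : ((ε / 2 + -r : ℝ) : EReal) = ((-r : ℝ) : EReal) + ((ε / 2 : ℝ) : EReal) := by
        rw [← EReal.coe_add]; ring_nf
      rw [e3, ← add_assoc]
      have e4 : upperSum f y + ((-r : ℝ) : EReal) = upperSum f y - ((r : ℝ) : EReal) := by
        rw [sub_eq_add_neg, ← EReal.coe_neg]
      rw [e4]
      have e5 : ((η + ε / 2 : ℝ) : EReal) = ((η : ℝ) : EReal) + ((ε / 2 : ℝ) : EReal) :=
        EReal.coe_add _ _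
      rw [e5]
      exact add_le_add_left hB.le _
  unfold limsupF
  refine le_trans (iInf_le_of_le (insert t₀ S₀)
    (iSup_le fun S => iSup_le fun hS => key S hS)) ?_
  refine EReal.coe_le_coe_iff.2 ?_
  have := min_le_right ρ (ε / 2)
  simp only [hηdef]
  linarith

end Aux

/-- Stability of firm quasiuniform lower semicontinuity under a perturbation of one
function by a function uniformly continuous on `U`. -/
theorem firm_quasiuniform_lsc_stable_under_perturbation
    {X : Type*} [MetricSpace X] {T : Type*} [Nonempty T] [DecidableEq T]
    (f : T → X → EReal) (U : Set X)
    (hbot : ∀ t x, f t x ≠ ⊥)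
    (hdom : ∃ x : X, upperSum f x ≠ ⊤)
    (hbdd : ∀ S : Finset T, (⨅ x : X, ∑ t ∈ S, f t x) ≠ ⊥)
    (hTheta : ThetaDag U f = 0)
    (g : X → ℝ)
    (hg : ∀ ε : ℝ, 0 < ε → ∃ ρ : ℝ, 0 < ρ ∧
      ∀ x' ∈ U, ∀ x'' ∈ U, dist x' x'' < ρ → |g x' - g x''| < ε)
    (t₀ : T) :
    ThetaDag U
      (fun t x => if t = t₀ then f t x + ((g x : ℝ) : EReal) else f t x) = 0 := by
  have h0 : (⨆ V ∈ EI U, limsupF fun S => ThetaFin2 V U f S) = 0 := hTheta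
  have hle : ThetaDag U
      (fun t x => if t = t₀ then f t x + ((g x : ℝ) : EReal) else f t x) ≤ 0 := by
    unfold ThetaDag
    refine iSup₂_le fun V hV => ?_
    refine limsup_perturb_le V U f g t₀ hbot hV.1 hg ?_
    have h1 := le_iSup₂ (f := fun (V : Set X) (_ : V ∈ EI U) =>
      limsupF fun S => ThetaFin2 V U f S) V hV
    rw [h0] at h1
    exact h1
  refine le_antisymm hle ?_
  by_contra hcon
  rw [not_le] at hcon
  have hex : ∃ V ∈ EI U, limsupF (fun S => ThetaFin2 V U f S) ≠ ⊥ := by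
    by_contra hall
    push_neg at hall
    have hb : (⨆ V ∈ EI U, limsupF fun S => ThetaFin2 V U f S) ≤ ⊥ :=
      iSup₂_le fun V hV => (hall V hV).le
    rw [h0] at hb
    exact absurd hb (by simp)
  obtain ⟨V, hV, hne⟩ := hex
  have hVlt : limsupF (fun S => ThetaFin2 V U
      (fun t x => if t = t₀ then f t x + ((g x : ℝ) : EReal) else f t x) S) < 0 := by
    refine lt_of_le_of_lt ?_ hcon
    exact le_iSup₂ (f := fun (V : Set X) (_ : V ∈ EI U) => limsupF fun S => ThetaFin2 V U
      (fun t x => if t = t₀ then f t x + ((g x : ℝ) : EReal) else f t x) S) V hV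
  exact hne (limsup_bot_transfer V U _ f t₀
    (fun t x htop => (perturb_top_iff f g t₀ t x).1 htop) hVlt)

end
end
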